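/- arXiv:1607.03566 — 3 statements merged into one kernel-verified Lean document; each statement's English description precedes it below -/
import Mathlib

section
/- For every pair of distinct points u, v ∈ {0,1}ⁿ, the midpoint (u+v)/2 lies in the ball B = {x ∈ ℝⁿ : ∑ᵢ (xᵢ - 1/2)² ≤ (n-1)/4} whenever n ≥ 2. Consequently, any closed half-space containing B contains at least 2ⁿ - 1 of the 2ⁿ points of {0,1}ⁿ. -/
theorem midpoints_in_ball_and_halfspace_count (n : ℕ) (hn : 2 ≤ n) :
    (∀ u v : Fin n → ℝ, (∀ i, u i = 0 ∨ u i = 1) → (∀ i, v i = 0 ∨ v i = 1) →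
      u ≠ v → ∑ i, ((u i + v i)/2 - 1/2)^2 ≤ ((n : ℝ) - 1)/4) ∧
    (∀ a : Fin n → ℝ, ∀ b : ℝ,
      (∀ x : Fin n → ℝ, ∑ i, (x i - 1/2)^2 ≤ ((n : ℝ) - 1)/4 → ∑ i, a i * x i ≤ b) →
      2^n - 1 ≤ (Finset.univ.filter (fun s : Fin n → Bool =>
        ∑ i, a i * (if s i then (1:ℝ) else 0) ≤ b)).card) := by
  classical
  have part1 : ∀ u v : Fin n → ℝ, (∀ i, u i = 0 ∨ u i = 1) → (∀ i, v i = 0 ∨ v i = 1) →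
      u ≠ v → ∑ i, ((u i + v i)/2 - 1/2)^2 ≤ ((n : ℝ) - 1)/4 := by
    intro u v hu hv huv
    obtain ⟨j, hj⟩ := Function.ne_iff.mp huv
    have hterm : ∀ i, ((u i + v i)/2 - 1/2)^2 ≤ 1/4 := by
      intro i
      rcases hu i with h1 | h1 <;> rcases hv i with h2 | h2 <;> rw [h1, h2] <;> norm_num
    have hj0 : ((u j + v j)/2 - 1/2)^2 = 0 := by
      rcases hu j with h1 | h1 <;> rcases hv j with h2 | h2 <;>
        first
          | exact absurd (h1.trans h2.symm) hj
          | (rw [h1, h2]; norm_num)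
    have hsplit : ∑ i, ((u i + v i)/2 - 1/2)^2
        = ∑ i ∈ Finset.univ.erase j, ((u i + v i)/2 - 1/2)^2 + ((u j + v j)/2 - 1/2)^2 :=
      (Finset.sum_erase_add _ _ (Finset.mem_univ j)).symm
    rw [hsplit, hj0, add_zero]
    have hcard : (Finset.univ.erase j).card = n - 1 := by
      rw [Finset.card_erase_of_mem (Finset.mem_univ j)]
      simp
    have hle : ∑ i ∈ Finset.univ.erase j, ((u i + v i)/2 - 1/2)^2
        ≤ (Finset.univ.erase j).card • (1/4 : ℝ) :=
      Finset.sum_le_card_nsmul _ _ _ (fun i _ => hterm i)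
    rw [hcard, nsmul_eq_mul] at hle
    have hcast : ((n - 1 : ℕ) : ℝ) = (n : ℝ) - 1 := by
      have : 1 ≤ n := by omega
      push_cast [Nat.cast_sub this]
      ring
    rw [hcast] at hle
    linarith
  refine ⟨part1, ?_⟩
  intro a b hb
  have hcompl : (Finset.univ.filter (fun s : Fin n → Bool =>
      ¬ ∑ i, a i * (if s i then (1:ℝ) else 0) ≤ b)).card ≤ 1 := by
    rw [Finset.card_le_one]
    intro s hs t ht
    by_contra hst
    simp only [Finset.mem_filter, not_le] at hs ht
    set x : Fin n → ℝ := fun i => if s i then 1 else 0 with hxdef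
    set y : Fin n → ℝ := fun i => if t i then 1 else 0 with hydef
    have hxy : x ≠ y := by
      intro h
      apply hst
      funext i
      have hi := congrFun h i
      by_cases h1 : s i <;> by_cases h2 : t i <;>
        simp [hxdef, hydef, h1, h2] at hi ⊢
    have hx01 : ∀ i, x i = 0 ∨ x i = 1 := fun i => by
      by_cases h : s i <;> simp [hxdef, h]
    have hy01 : ∀ i, y i = 0 ∨ y i = 1 := fun i => by
      by_cases h : t i <;> simp [hydef, h]
    have hm := part1 x y hx01 hy01 hxy
    have hmid : ∑ i, (((x i + y i)/2 : ℝ) - 1/2)^2 ≤ ((n : ℝ) - 1)/4 := hm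
    have hball := hb (fun i => (x i + y i)/2) hmid
    have hsum : ∑ i, a i * ((x i + y i)/2)
        = ((∑ i, a i * x i) + ∑ i, a i * y i)/2 := by
      rw [← Finset.sum_add_distrib, Finset.sum_div]
      exact Finset.sum_congr rfl (fun i _ => by ring)
    rw [hsum] at hball
    have hs' : b < ∑ i, a i * x i := hs.2
    have ht' : b < ∑ i, a i * y i := ht.2
    linarith
  have hsplit := Finset.card_filter_add_card_filter_not
    (s := (Finset.univ : Finset (Fin n → Bool)))
    (p := fun s : Fin n → Bool => ∑ i, a i * (if s i then (1:ℝ) else 0) ≤ b)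
  have hcardu : (Finset.univ : Finset (Fin n → Bool)).card = 2 ^ n := by
    simp [Finset.card_univ]
  rw [hcardu] at hsplit
  set c1 := (Finset.univ.filter (fun s : Fin n → Bool =>
      ∑ i, a i * (if s i then (1:ℝ) else 0) ≤ b)).card with hc1
  set c2 := (Finset.univ.filter (fun s : Fin n → Bool =>
      ¬ ∑ i, a i * (if s i then (1:ℝ) else 0) ≤ b)).card with hc2
  clear_value c1 c2
  clear hc1 hc2
  omega
end

section
/- Any polyhedral outer approximation of the ball B = {x ∈ ℝⁿ : ∑ᵢ (xᵢ - 1/2)² ≤ (n-1)/4} (n ≥ 2) whose intersection with {0,1}ⁿ is empty requires at least 2ⁿ half-spaces. -/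
theorem polyhedral_approx_needs_exponentially_many_halfspaces
    (n : ℕ) (hn : 2 ≤ n) (m : ℕ) (a : Fin m → Fin n → ℝ) (b : Fin m → ℝ)
    (houter : ∀ j, ∀ x : Fin n → ℝ,
      ∑ i, (x i - 1/2)^2 ≤ ((n : ℝ) - 1)/4 → ∑ i, a j i * x i ≤ b j)
    (hexclude : ∀ x : Fin n → ℝ, (∀ i, x i = 0 ∨ x i = 1) →
      ∃ j, b j < ∑ i, a j i * x i) :
    2^n ≤ m := by
  classical
  set X : (Fin n → Bool) → (Fin n → ℝ) := fun v i => if v i then 1 else 0 with hX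
  have hX01 : ∀ v, ∀ i, X v i = 0 ∨ X v i = 1 := by
    intro v i; by_cases h : v i <;> simp [hX, h]
  choose f hf using fun v => hexclude (X v) (hX01 v)
  have hinj : Function.Injective f := by
    intro v w hvw
    by_contra hne
    obtain ⟨i0, hi0⟩ : ∃ i, v i ≠ w i := by
      by_contra h; push_neg at h; exact hne (funext h)
    set z : Fin n → ℝ := fun i => (X v i + X w i) / 2 with hz
    have hball : ∑ i, (z i - 1/2)^2 ≤ ((n : ℝ) - 1)/4 := by
      have hle : ∀ i : Fin n, (z i - 1/2)^2 ≤
          (1:ℝ)/4 - (if i = i0 then 1/4 else 0) := by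
        intro i
        by_cases hi : i = i0
        · have hi0' : v i ≠ w i := by rw [hi]; exact hi0
          have : z i = 1/2 := by
            rcases Bool.eq_false_or_eq_true (v i) with h1 | h1 <;>
            rcases Bool.eq_false_or_eq_true (w i) with h2 | h2 <;>
            simp [hz, hX, h1, h2] at hi0' ⊢ <;> norm_num
          rw [← hi]; simp [this]
        · rcases hX01 v i with h1 | h1 <;> rcases hX01 w i with h2 | h2 <;>
          simp [hz, h1, h2, hi] <;> norm_num
      calc ∑ i, (z i - 1/2)^2 ≤ ∑ i : Fin n, ((1:ℝ)/4 - (if i = i0 then 1/4 else 0)) :=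
            Finset.sum_le_sum fun i _ => hle i
        _ = (n : ℝ)/4 - 1/4 := by
            rw [Finset.sum_sub_distrib, Finset.sum_ite_eq' Finset.univ i0 (fun _ => (1:ℝ)/4)]
            simp [Finset.sum_const, mul_comm]
            ring
        _ = ((n : ℝ) - 1)/4 := by ring
    have hmid := houter (f v) z hball
    have h1 := hf v
    have h2 := hf w
    rw [hvw] at h1
    have hzsum : ∑ i, a (f w) i * z i
        = ((∑ i, a (f w) i * X v i) + ∑ i, a (f w) i * X w i) / 2 := by
      rw [← Finset.sum_add_distrib, Finset.sum_div]
      exact Finset.sum_congr rfl fun i _ => by simp [hz]; ring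
    rw [hvw] at hmid
    rw [hzsum] at hmid
    linarith
  calc 2^n = Fintype.card (Fin n → Bool) := by simp
    _ ≤ Fintype.card (Fin m) := Fintype.card_le_of_injective f hinj
    _ = m := by simp
end

section
/- There is no polyhedral outer approximation P ⊇ RSOC₃ (an intersection of finitely many closed half-spaces containing RSOC₃) such that the linear program min{z : x = 0, (x,y,z) ∈ P} is bounded below. Equivalently, for every polyhedron P ⊇ RSOC₃ there exist points (0, y, z) ∈ P with z arbitrarily negative. -/
theorem no_bounded_polyhedral_outer_approx_of_rsoc
    (m : ℕ) (a : Fin m → ℝ × ℝ × ℝ) (b : Fin m → ℝ)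
    (houter : ∀ x y z : ℝ, 2*x*y ≥ z^2 → x ≥ 0 → y ≥ 0 →
      ∀ j, (a j).1 * x + (a j).2.1 * y + (a j).2.2 * z ≥ b j) :
    ∀ M : ℝ, ∃ y z : ℝ, z < M ∧
      ∀ j, (a j).1 * 0 + (a j).2.1 * y + (a j).2.2 * z ≥ b j := by
  intro M
  classical
  set z : ℝ := min M 0 - 1 with hz
  have hzM : z < M := by
    simp only [hz]; have := min_le_left M 0; linarith
  have hz0 : z < 0 := by
    simp only [hz]; have := min_le_right M 0; linarith
  set c : Fin m → ℝ :=
    fun j => if 0 < (a j).2.1 then (b j - (a j).2.2 * z) / (a j).2.1 else 0 with hc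
  refine ⟨∑ i, |c i|, z, hzM, ?_⟩
  intro j
  have hb : b j ≤ 0 := by
    have := houter 0 0 0 (by norm_num) le_rfl le_rfl j
    linarith
  have ha2 : 0 ≤ (a j).2.1 := by
    by_contra h
    push_neg at h
    have hn : 0 ≤ (b j - 1) / (a j).2.1 := by
      apply div_nonneg_iff.mpr; right; exact ⟨by linarith, h.le⟩
    have h2 := houter 0 ((b j - 1) / (a j).2.1) 0 (by nlinarith) le_rfl hn j
    have heq : (a j).2.1 * ((b j - 1) / (a j).2.1) = b j - 1 := by
      rw [mul_comm, div_mul_eq_mul_div, mul_div_assoc, div_self (ne_of_lt h), mul_one]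
    linarith [h2, heq]
  rcases lt_or_eq_of_le ha2 with hpos | hzero
  · have hy : c j ≤ ∑ i, |c i| :=
      le_trans (le_abs_self _)
        (Finset.single_le_sum (fun i _ => abs_nonneg (c i)) (Finset.mem_univ j))
    have hcj : (a j).2.1 * c j = b j - (a j).2.2 * z := by
      simp only [hc, if_pos hpos]
      field_simp
    have hmul : (a j).2.1 * c j ≤ (a j).2.1 * (∑ i, |c i|) :=
      mul_le_mul_of_nonneg_left hy hpos.le
    linarith
  · have ha3 : (a j).2.2 ≤ 0 := by
      by_contra h
      push_neg at h
      set t : ℝ := ((a j).1 - b j + 1) / (a j).2.2 with ht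
      have h2 := houter 1 (t ^ 2 / 2) (-t) (by ring_nf; nlinarith [sq_nonneg t])
        (by norm_num) (by positivity) j
      have heq : (a j).2.2 * t = (a j).1 - b j + 1 := by
        rw [ht]; field_simp
      nlinarith [h2, heq]
    rw [← hzero]
    nlinarith [mul_nonneg (neg_nonneg.mpr ha3) (by linarith : (0:ℝ) ≤ -z)]
end
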